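/- arXiv:2401.01335 — 5 statements merged into one kernel-verified Lean document; each statement's English description precedes it below -/
import Mathlib

section
/- Let p and q be probability mass functions on a countable type with q(y) > 0 whenever p(y) > 0 and p(y) > 0 whenever q(y) > 0, and let ℓ be a convex function. If Y ∼ p and Y' ∼ p are independent samples from the same distribution p, then for any function f, E[ℓ(f(Y) - f(Y'))] ≥ ℓ(0). Consequently, when the model distribution equals the data distribution, the SPIN loss E_{y∼p, y'∼p}[ℓ(λ·log(p_θ(y)/p(y)) - λ·log(p_θ(y')/p(y')))] is minimized (with value ℓ(0)) at p_θ = p. -/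
private lemma spin_aux_core {α : Type*} [Countable α]
    (p : α → ℝ) (hp : ∀ y, 0 < p y) (hp1 : ∑' y, p y = 1)
    (ℓ : ℝ → ℝ) (hℓ : ConvexOn ℝ Set.univ ℓ)
    (f : α → ℝ)
    (hs : Summable (fun yy : α × α => p yy.1 * p yy.2 * ℓ (f yy.1 - f yy.2))) :
    (∑' yy : α × α, p yy.1 * p yy.2 * ℓ (f yy.1 - f yy.2)) ≥ ℓ 0 := by
  have hpsum : Summable p := by
    by_contra h
    rw [tsum_eq_zero_of_not_summable h] at hp1
    norm_num at hp1
  have hpp : Summable (fun yy : α × α => p yy.1 * p yy.2) :=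
    hpsum.mul_of_nonneg hpsum (fun y => (hp y).le) (fun y => (hp y).le)
  have hpp1 : (∑' yy : α × α, p yy.1 * p yy.2) = 1 := by
    have h := hpsum.hasSum.mul_eq hpsum.hasSum hpp.hasSum
    rw [hp1, one_mul] at h
    exact h.symm
  set g : α × α → ℝ := fun yy => p yy.1 * p yy.2 * ℓ (f yy.1 - f yy.2) with hg
  have hswap : Summable (fun yy : α × α => g yy.swap) :=
    ((Equiv.prodComm α α).summable_iff).mpr hs
  have hswapsum : (∑' yy : α × α, g yy.swap) = ∑' yy, g yy :=
    (Equiv.prodComm α α).tsum_eq g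
  have key : ∀ yy : α × α, 2 * ℓ 0 * (p yy.1 * p yy.2) ≤ g yy + g yy.swap := by
    intro ⟨y, y'⟩
    have hc := hℓ.2 (Set.mem_univ (f y - f y')) (Set.mem_univ (f y' - f y))
      (by norm_num : (0:ℝ) ≤ 1/2) (by norm_num : (0:ℝ) ≤ 1/2) (by norm_num)
    simp only [smul_eq_mul] at hc
    have h0 : (1/2 : ℝ) * (f y - f y') + 1/2 * (f y' - f y) = 0 := by ring
    rw [h0] at hc
    have hpnn : 0 ≤ p y * p y' := mul_nonneg (hp y).le (hp y').le
    simp only [hg, Prod.swap]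
    nlinarith [mul_le_mul_of_nonneg_left hc hpnn]
  have hsum2 : (∑' yy : α × α, (2 * ℓ 0 * (p yy.1 * p yy.2))) ≤
      ∑' yy, (g yy + g yy.swap) :=
    Summable.tsum_le_tsum key (hpp.mul_left _) (hs.add hswap)
  rw [Summable.tsum_add hs hswap, hswapsum, tsum_mul_left, hpp1, mul_one] at hsum2
  linarith

/-- If `Y, Y'` are i.i.d. with pmf `p` on a countable type, then for any `f` and
convex loss `ℓ`, `E[ℓ(f(Y) - f(Y'))] ≥ ℓ 0`; consequently the SPIN loss at
opponent `p` is minimized, with value `ℓ 0`, by the choice `pθ = p`. -/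
theorem spin_iid_expectation_ge_and_min
    {α : Type*} [Countable α]
    (p : α → ℝ) (hp : ∀ y, 0 < p y) (hp1 : ∑' y, p y = 1)
    (ℓ : ℝ → ℝ) (hℓ : ConvexOn ℝ Set.univ ℓ) :
    (∀ f : α → ℝ,
        Summable (fun yy : α × α => p yy.1 * p yy.2 * ℓ (f yy.1 - f yy.2)) →
        (∑' yy : α × α, p yy.1 * p yy.2 * ℓ (f yy.1 - f yy.2)) ≥ ℓ 0) ∧
    (∀ (lam : ℝ) (pθ : α → ℝ), (∀ y, 0 < pθ y) →
        Summable (fun yy : α × α => p yy.1 * p yy.2 *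
          ℓ (lam * Real.log (pθ yy.1 / p yy.1) - lam * Real.log (pθ yy.2 / p yy.2))) →
        (∑' yy : α × α, p yy.1 * p yy.2 *
          ℓ (lam * Real.log (pθ yy.1 / p yy.1) - lam * Real.log (pθ yy.2 / p yy.2))) ≥ ℓ 0) ∧
    (∀ lam : ℝ,
        (∑' yy : α × α, p yy.1 * p yy.2 *
          ℓ (lam * Real.log (p yy.1 / p yy.1) - lam * Real.log (p yy.2 / p yy.2))) = ℓ 0) := by
  have hpsum : Summable p := by
    by_contra h
    rw [tsum_eq_zero_of_not_summable h] at hp1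
    norm_num at hp1
  have hpp : Summable (fun yy : α × α => p yy.1 * p yy.2) :=
    hpsum.mul_of_nonneg hpsum (fun y => (hp y).le) (fun y => (hp y).le)
  have hpp1 : (∑' yy : α × α, p yy.1 * p yy.2) = 1 := by
    have h := hpsum.hasSum.mul_eq hpsum.hasSum hpp.hasSum
    rw [hp1, one_mul] at h
    exact h.symm
  refine ⟨fun f hs => spin_aux_core p hp hp1 ℓ hℓ f hs, fun lam pθ hpθ hs => ?_, fun lam => ?_⟩
  · exact spin_aux_core p hp hp1 ℓ hℓ (fun y => lam * Real.log (pθ y / p y)) hs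
  · have h1 : ∀ y, p y / p y = 1 := fun y => div_self (hp y).ne'
    simp_rw [h1, Real.log_one, mul_zero, sub_zero]
    rw [tsum_mul_right, hpp1, one_mul]
end

section
/- Let p and q be probability mass functions on a countable type that are mutually absolutely continuous. Define g(λ) = E_{Y∼p, Y'∼q}[ℓ(λ·log(p(Y)/q(Y)) - λ·log(p(Y')/q(Y')))] where ℓ is differentiable at 0 with ℓ'(0) < 0. Then g'(0) = ℓ'(0)·(KL(p‖q) + KL(q‖p)), which is strictly negative whenever p ≠ q. -/
/-!
With `L = log (p / q)`, differentiating under the finite sum gives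
`g'(0) = ℓ'(0) · E[L Y - L Y'] = ℓ'(0) · ∑ (p - q) · L`, and since `log (q / p) = -L` this sum is
`KL(p‖q) + KL(q‖p)`. Its terms are nonnegative because `log` is increasing, and positive
wherever `p ≠ q`.
-/

open Finset Real

theorem hasDerivAt_sum_mul_comp_mul_zero {ι : Type*} (s : Finset ι) (c a : ι → ℝ)
    {ℓ : ℝ → ℝ} {dl : ℝ} (hℓ : HasDerivAt ℓ dl 0) :
    HasDerivAt (fun t => ∑ i ∈ s, c i * ℓ (t * a i)) (dl * ∑ i ∈ s, c i * a i) 0 := by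
  have hterm : ∀ i ∈ s, HasDerivAt (fun t => c i * ℓ (t * a i)) (dl * (c i * a i)) 0 :=
    fun i _ => ((hℓ.comp_of_eq 0 ((hasDerivAt_id 0).mul_const (a i)) (zero_mul _).symm).const_mul
      (c i)).congr_deriv (by ring)
  rw [mul_sum]
  exact HasDerivAt.fun_sum hterm

theorem sub_mul_log_div_pos {a b : ℝ} (ha : 0 < a) (hb : 0 < b) (hab : a ≠ b) :
    0 < (a - b) * log (a / b) := by
  rw [log_div ha.ne' hb.ne']
  rcases hab.lt_or_gt with h | h
  · exact mul_pos_of_neg_of_neg (sub_neg.2 h) (sub_neg.2 (log_lt_log ha h))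
  · exact mul_pos (sub_pos.2 h) (sub_pos.2 (log_lt_log hb h))

section

variable {α : Type*} [Fintype α]

theorem sum_sum_mul_mul_sub_eq_sum_sub_mul {p q : α → ℝ}
    (hp1 : ∑ y, p y = 1) (hq1 : ∑ y, q y = 1) (L : α → ℝ) :
    ∑ y, ∑ y', p y * q y' * (L y - L y') = ∑ y, (p y - q y) * L y := by
  have h₁ (y : α) : ∑ y', p y * q y' * L y = p y * L y := by
    rw [← sum_mul, ← mul_sum, hq1, mul_one]
  have h₂ : ∑ y, ∑ y', p y * q y' * L y' = ∑ y, q y * L y := by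
    simp_rw [mul_assoc, ← mul_sum, ← sum_mul, hp1, one_mul]
  simp only [mul_sub, sum_sub_distrib, h₁, h₂, sub_mul]

theorem sum_mul_log_div_add_sum_mul_log_div (p q : α → ℝ) :
    ∑ y, p y * log (p y / q y) + ∑ y, q y * log (q y / p y)
      = ∑ y, (p y - q y) * log (p y / q y) := by
  have h (y : α) : q y * log (q y / p y) = -(q y * log (p y / q y)) := by
    rw [← inv_div, log_inv, mul_neg]
  simp only [h, sum_neg_distrib, ← sub_eq_add_neg, sub_mul, sum_sub_distrib]

theorem sum_sub_mul_log_div_pos {p q : α → ℝ}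
    (hp : ∀ y, 0 < p y) (hq : ∀ y, 0 < q y) (hpq : p ≠ q) :
    0 < ∑ y, (p y - q y) * log (p y / q y) := by
  obtain ⟨y₀, hy₀⟩ := Function.ne_iff.1 hpq
  refine sum_pos' (fun y _ => ?_) ⟨y₀, mem_univ _, sub_mul_log_div_pos (hp y₀) (hq y₀) hy₀⟩
  rcases eq_or_ne (p y) (q y) with h | h
  · simp [h]
  · exact (sub_mul_log_div_pos (hp y) (hq y) h).le

end

/-- Derivative of `g(λ) = E_{Y∼p, Y'∼q}[ℓ(λ log(p(Y)/q(Y)) - λ log(p(Y')/q(Y')))]`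
at `λ = 0` equals `ℓ'(0) · (KL(p‖q) + KL(q‖p))`, which is negative when `p ≠ q`. -/
theorem spin_g_deriv_at_zero
    {α : Type*} [Fintype α]
    (p q : α → ℝ) (hp : ∀ y, 0 < p y) (hq : ∀ y, 0 < q y)
    (hp1 : ∑ y, p y = 1) (hq1 : ∑ y, q y = 1)
    (ℓ : ℝ → ℝ) (dl : ℝ) (hℓ : HasDerivAt ℓ dl 0) (hdl : dl < 0) :
    HasDerivAt (fun lam : ℝ => ∑ y, ∑ y', p y * q y' *
        ℓ (lam * Real.log (p y / q y) - lam * Real.log (p y' / q y')))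
      (dl * ((∑ y, p y * Real.log (p y / q y)) + (∑ y, q y * Real.log (q y / p y)))) 0 ∧
    (p ≠ q →
      dl * ((∑ y, p y * Real.log (p y / q y)) + (∑ y, q y * Real.log (q y / p y))) < 0) := by
  rw [sum_mul_log_div_add_sum_mul_log_div]
  refine ⟨?_, fun hpq => mul_neg_of_neg_of_pos hdl (sum_sub_mul_log_div_pos hp hq hpq)⟩
  have hg := hasDerivAt_sum_mul_comp_mul_zero univ (fun x : α × α => p x.1 * q x.2)
    (fun x => Real.log (p x.1 / q x.1) - Real.log (p x.2 / q x.2)) hℓ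
  rw [← sum_sum_mul_mul_sub_eq_sum_sub_mul hp1 hq1]
  simpa only [Fintype.sum_prod_type, mul_sub] using hg
end

section
/- Let p_data and p_t be everywhere-positive probability mass functions on a countable type, let ℓ(t) = log(1+exp(-t)), and let Y ∼ p_data and Y' ∼ p_t be independent. Then for any function f, E[ℓ(f(Y) − f(Y'))] ≥ log 2 − JSD(p₊‖p₋), where p₊(y,y') = p_data(y)·p_t(y') and p₋(y,y') = p_t(y)·p_data(y') are product distributions on pairs. Moreover, the lower bound is attained by f if and only if there is a constant Z such that f(y) = Z + log(p_data(y)/p_t(y)) for all y. -/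
/-!
Symmetrising over the swap `(y, y') ↦ (y', y)` writes twice the expected loss as
`∑ p₊ ℓ(t) + p₋ ℓ(-t)` with `t = f y - f y'`. Pointwise, with `q = σ(t)` the sigmoid, the term
`a ℓ(t) + b ℓ(-t) = -(a log q + b log (1 - q))` is a binary cross-entropy, which exceeds the
entropy of `(a, b)` by a sum of two nonnegative `klFun` terms vanishing exactly when
`q = a / (a + b)`, i.e. `t = log (a / b)`. Summing the entropies gives `2 log 2 - 2 JSD(p₊‖p₋)`.
-/

open Real InformationTheory

lemma mul_klFun_div {a x : ℝ} (hx : x ≠ 0) : x * klFun (a / x) = a * log (a / x) + x - a := by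
  rw [klFun_apply]
  field_simp

lemma log_one_add_exp_neg (t : ℝ) : log (1 + exp (-t)) = -log (sigmoid t) := by
  rw [sigmoid_def, log_inv, neg_neg]

lemma sigmoid_log_div {a b : ℝ} (ha : 0 < a) (hb : 0 < b) :
    sigmoid (log (a / b)) = a / (a + b) := by
  rw [sigmoid_def, ← log_inv, inv_div, exp_log (div_pos hb ha)]
  field_simp

lemma log_mul_div_mul {a b c d : ℝ} (ha : 0 < a) (hb : 0 < b) (hc : 0 < c) (hd : 0 < d) :
    log (a * d / (c * b)) = log (a / c) - log (b / d) := by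
  rw [← log_div (by positivity) (by positivity)]
  congr 1
  field_simp

/- `(a + b) * log 2 - (a * log (a / m) + b * log (b / m))` with `m = (a + b) / 2` is the entropy
`-(a * log (a / (a + b)) + b * log (b / (a + b)))`, written in the shape of the JSD summands. -/
lemma crossEntropy_eq_entropy_add_klFun {a b q : ℝ} (ha : 0 < a) (hb : 0 < b)
    (hq : 0 < q) (hq1 : q < 1) :
    -(a * log q + b * log (1 - q)) =
      (a + b) * log 2 - (a * log (a / ((a + b) / 2)) + b * log (b / ((a + b) / 2)))
        + ((a + b) * q * klFun (a / ((a + b) * q))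
          + (a + b) * (1 - q) * klFun (b / ((a + b) * (1 - q)))) := by
  have h1q : 0 < 1 - q := by linarith
  have log_div_mul : ∀ {c r : ℝ}, 0 < c → 0 < r →
      log (c / ((a + b) * r)) = log (c / ((a + b) / 2)) - log 2 - log r := by
    intro c r hc hr
    rw [show c / ((a + b) * r) = c / ((a + b) / 2) / 2 / r by field_simp,
      log_div (by positivity) hr.ne', log_div (by positivity) two_ne_zero]
  rw [mul_klFun_div (by positivity), mul_klFun_div (by positivity), log_div_mul ha hq,
    log_div_mul hb h1q]
  ring

lemma entropy_le_crossEntropy {a b q : ℝ} (ha : 0 < a) (hb : 0 < b) (hq : 0 < q) (hq1 : q < 1) :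
    (a + b) * log 2 - (a * log (a / ((a + b) / 2)) + b * log (b / ((a + b) / 2)))
      ≤ -(a * log q + b * log (1 - q)) := by
  have hx : 0 < (a + b) * q := by positivity
  have hy : 0 < (a + b) * (1 - q) := mul_pos (by positivity) (by linarith)
  rw [crossEntropy_eq_entropy_add_klFun ha hb hq hq1, le_add_iff_nonneg_right]
  exact add_nonneg (mul_nonneg hx.le (klFun_nonneg (div_pos ha hx).le))
    (mul_nonneg hy.le (klFun_nonneg (div_pos hb hy).le))

lemma entropy_eq_crossEntropy_iff {a b q : ℝ} (ha : 0 < a) (hb : 0 < b)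
    (hq : 0 < q) (hq1 : q < 1) :
    (a + b) * log 2 - (a * log (a / ((a + b) / 2)) + b * log (b / ((a + b) / 2)))
      = -(a * log q + b * log (1 - q)) ↔ q = a / (a + b) := by
  have hs : 0 < a + b := by positivity
  have hx : 0 < (a + b) * q := by positivity
  have hy : 0 < (a + b) * (1 - q) := mul_pos hs (by linarith)
  have kx := klFun_nonneg (div_pos ha hx).le
  have ky := klFun_nonneg (div_pos hb hy).le
  rw [crossEntropy_eq_entropy_add_klFun ha hb hq hq1, left_eq_add,
    add_eq_zero_iff_of_nonneg (mul_nonneg hx.le kx) (mul_nonneg hy.le ky),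
    mul_eq_zero_iff_left hx.ne', mul_eq_zero_iff_left hy.ne',
    klFun_eq_zero_iff (div_pos ha hx).le, klFun_eq_zero_iff (div_pos hb hy).le,
    div_eq_one_iff_eq hx.ne', div_eq_one_iff_eq hy.ne', eq_div_iff hs.ne']
  constructor
  · rintro ⟨h, -⟩
    linarith
  · intro h
    constructor <;> linarith

lemma logisticLoss_pair_eq_crossEntropy (a b t : ℝ) :
    a * log (1 + exp (-t)) + b * log (1 + exp t)
      = -(a * log (sigmoid t) + b * log (1 - sigmoid t)) := by
  have h : log (1 + exp t) = -log (1 - sigmoid t) := by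
    rw [← sigmoid_neg, ← log_one_add_exp_neg, neg_neg]
  rw [log_one_add_exp_neg, h]
  ring

lemma entropy_le_logisticLoss_pair {a b : ℝ} (ha : 0 < a) (hb : 0 < b) (t : ℝ) :
    (a + b) * log 2 - (a * log (a / ((a + b) / 2)) + b * log (b / ((a + b) / 2)))
      ≤ a * log (1 + exp (-t)) + b * log (1 + exp t) := by
  rw [logisticLoss_pair_eq_crossEntropy]
  exact entropy_le_crossEntropy ha hb (sigmoid_pos t) (sigmoid_lt_one t)

lemma entropy_eq_logisticLoss_pair_iff {a b : ℝ} (ha : 0 < a) (hb : 0 < b) (t : ℝ) :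
    (a + b) * log 2 - (a * log (a / ((a + b) / 2)) + b * log (b / ((a + b) / 2)))
      = a * log (1 + exp (-t)) + b * log (1 + exp t) ↔ t = log (a / b) := by
  rw [logisticLoss_pair_eq_crossEntropy,
    entropy_eq_crossEntropy_iff ha hb (sigmoid_pos t) (sigmoid_lt_one t),
    ← sigmoid_log_div ha hb, sigmoid_inj]

lemma summable_of_tsum_ne_zero {ι M : Type*} [AddCommMonoid M] [TopologicalSpace M] {f : ι → M}
    (h : ∑' i, f i ≠ 0) : Summable f := by
  by_contra hf
  exact h (tsum_eq_zero_of_not_summable hf)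

lemma tsum_mul_tsum_of_nonneg {ι κ : Type*} {f : ι → ℝ} {g : κ → ℝ} (hf : Summable f)
    (hg : Summable g) (hf0 : 0 ≤ f) (hg0 : 0 ≤ g) :
    ∑' z : ι × κ, f z.1 * g z.2 = (∑' i, f i) * ∑' k, g k :=
  (hf.tsum_mul_tsum hg (hf.mul_of_nonneg hg hf0 hg0)).symm

lemma HasSum.eq_iff_of_le {ι α : Type*} [AddCommGroup α] [PartialOrder α] [IsOrderedAddMonoid α]
    [TopologicalSpace α] [IsTopologicalAddGroup α] [OrderClosedTopology α] [T2Space α]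
    {f g : ι → α} {a₁ a₂ : α} (h : ∀ i, f i ≤ g i) (hf : HasSum f a₁) (hg : HasSum g a₂) :
    a₁ = a₂ ↔ ∀ i, f i = g i := by
  refine ⟨fun heq i => ?_, fun hfg => hf.unique (funext hfg ▸ hg)⟩
  by_contra hne
  exact (hasSum_lt h ((h i).lt_of_ne hne) hf hg).ne heq

lemma exists_const_add_iff_forall_sub_eq {α G : Type*} [Nonempty α] [AddCommGroup G]
    {f g : α → G} : (∃ Z, ∀ y, f y = Z + g y) ↔ ∀ x y, f x - f y = g x - g y := by
  constructor
  · rintro ⟨Z, hZ⟩ x y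
    rw [hZ x, hZ y]
    abel
  · intro h
    obtain ⟨y₀⟩ := ‹Nonempty α›
    exact ⟨f y₀ - g y₀, fun y => eq_add_of_sub_eq (sub_eq_sub_iff_sub_eq_sub.1 (h y y₀))⟩

theorem tsum_entropy_le_tsum_logisticLoss_pair {ι : Type*} {a b t : ι → ℝ}
    (ha : ∀ i, 0 < a i) (hb : ∀ i, 0 < b i) (hsa : Summable a) (hsb : Summable b)
    (hJa : Summable fun i => a i * log (a i / ((a i + b i) / 2)))
    (hJb : Summable fun i => b i * log (b i / ((a i + b i) / 2)))
    (hLa : Summable fun i => a i * log (1 + exp (-t i)))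
    (hLb : Summable fun i => b i * log (1 + exp (t i))) :
    (∑' i, a i + ∑' i, b i) * log 2
        - (∑' i, a i * log (a i / ((a i + b i) / 2)) + ∑' i, b i * log (b i / ((a i + b i) / 2)))
      ≤ ∑' i, a i * log (1 + exp (-t i)) + ∑' i, b i * log (1 + exp (t i)) ∧
    ((∑' i, a i + ∑' i, b i) * log 2
        - (∑' i, a i * log (a i / ((a i + b i) / 2)) + ∑' i, b i * log (b i / ((a i + b i) / 2)))
      = ∑' i, a i * log (1 + exp (-t i)) + ∑' i, b i * log (1 + exp (t i))
      ↔ ∀ i, t i = log (a i / b i)) := by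
  have hH := ((hsa.hasSum.add hsb.hasSum).mul_right (log 2)).sub (hJa.hasSum.add hJb.hasSum)
  have hL := hLa.hasSum.add hLb.hasSum
  have hle := fun i => entropy_le_logisticLoss_pair (ha i) (hb i) (t i)
  refine ⟨hasSum_le hle hH hL, ?_⟩
  rw [hH.eq_iff_of_le hle hL]
  exact forall_congr' fun i => entropy_eq_logisticLoss_pair_iff (ha i) (hb i) (t i)

theorem spin_logistic_lower_bound_JSD_general
    {α : Type*}
    (pdata pt : α → ℝ) (hpd : ∀ y, 0 < pdata y) (hpt : ∀ y, 0 < pt y)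
    (hpd1 : ∑' y, pdata y = 1) (hpt1 : ∑' y, pt y = 1)
    (pp pm : α × α → ℝ)
    (hpp : pp = fun yy => pdata yy.1 * pt yy.2)
    (hpm : pm = fun yy => pt yy.1 * pdata yy.2)
    (JSD : ℝ)
    (hJSD : JSD = (1/2) * (∑' yy : α × α, pp yy * Real.log (pp yy / ((pp yy + pm yy) / 2)))
                + (1/2) * (∑' yy : α × α, pm yy * Real.log (pm yy / ((pp yy + pm yy) / 2))))
    (hJ1 : Summable (fun yy : α × α => pp yy * Real.log (pp yy / ((pp yy + pm yy) / 2))))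
    (hJ2 : Summable (fun yy : α × α => pm yy * Real.log (pm yy / ((pp yy + pm yy) / 2)))) :
    ∀ f : α → ℝ,
      Summable (fun yy : α × α =>
        pdata yy.1 * pt yy.2 * Real.log (1 + Real.exp (-(f yy.1 - f yy.2)))) →
      ((∑' yy : α × α, pdata yy.1 * pt yy.2 * Real.log (1 + Real.exp (-(f yy.1 - f yy.2))))
          ≥ Real.log 2 - JSD) ∧
      ((∑' yy : α × α, pdata yy.1 * pt yy.2 * Real.log (1 + Real.exp (-(f yy.1 - f yy.2))))
          = Real.log 2 - JSD
        ↔ ∃ Z : ℝ, ∀ y, f y = Z + Real.log (pdata y / pt y)) := by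
  intro f hS
  subst hpp hpm hJSD
  have hsd : Summable pdata := summable_of_tsum_ne_zero (by simp [hpd1])
  have hst : Summable pt := summable_of_tsum_ne_zero (by simp [hpt1])
  set loss : α × α → ℝ := fun yy => pdata yy.1 * pt yy.2 * log (1 + exp (-(f yy.1 - f yy.2)))
  have hswap : (fun yy : α × α => pt yy.1 * pdata yy.2 * log (1 + exp (f yy.1 - f yy.2)))
      = fun yy => loss yy.swap := by
    ext ⟨y, y'⟩
    simp only [loss, Prod.fst_swap, Prod.snd_swap, neg_sub]
    ring
  have hswap_tsum : ∑' yy : α × α, loss yy.swap = ∑' yy, loss yy :=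
    (Equiv.prodComm α α).tsum_eq loss
  obtain ⟨hle, heq⟩ := tsum_entropy_le_tsum_logisticLoss_pair
    (a := fun yy : α × α => pdata yy.1 * pt yy.2) (b := fun yy : α × α => pt yy.1 * pdata yy.2)
    (t := fun yy : α × α => f yy.1 - f yy.2)
    (fun _ => mul_pos (hpd _) (hpt _)) (fun _ => mul_pos (hpt _) (hpd _))
    (hsd.mul_of_nonneg hst (fun y => (hpd y).le) (fun y => (hpt y).le))
    (hst.mul_of_nonneg hsd (fun y => (hpt y).le) (fun y => (hpd y).le)) hJ1 hJ2 hS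
    (hswap ▸ hS.prod_symm)
  rw [hswap, hswap_tsum,
    tsum_mul_tsum_of_nonneg hsd hst (fun y => (hpd y).le) (fun y => (hpt y).le),
    tsum_mul_tsum_of_nonneg hst hsd (fun y => (hpt y).le) (fun y => (hpd y).le),
    hpd1, hpt1] at hle heq
  simp only [Prod.forall, log_mul_div_mul (hpd _) (hpd _) (hpt _) (hpt _)] at heq
  have : Nonempty α := by
    by_contra h
    rw [not_nonempty_iff] at h
    simp at hpd1
  refine ⟨by linarith, ?_⟩
  rw [exists_const_add_iff_forall_sub_eq, ← heq]
  constructor <;> intro h <;> linarith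

/-- Lemma B.2 of SPIN: for independent `Y ∼ p_data`, `Y' ∼ p_t`,
`E[ℓ(f(Y) − f(Y'))] ≥ log 2 − JSD(p₊‖p₋)` where `ℓ` is the logistic loss and
`p₊(y,y') = p_data(y) p_t(y')`, `p₋(y,y') = p_t(y) p_data(y')`; the bound is
attained iff `f = Z + log(p_data/p_t)` for some constant `Z`. -/
theorem spin_logistic_lower_bound_JSD
    {α : Type*} [Countable α]
    (pdata pt : α → ℝ) (hpd : ∀ y, 0 < pdata y) (hpt : ∀ y, 0 < pt y)
    (hpd1 : ∑' y, pdata y = 1) (hpt1 : ∑' y, pt y = 1)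
    (pp pm : α × α → ℝ)
    (hpp : pp = fun yy => pdata yy.1 * pt yy.2)
    (hpm : pm = fun yy => pt yy.1 * pdata yy.2)
    (JSD : ℝ)
    (hJSD : JSD = (1/2) * (∑' yy : α × α, pp yy * Real.log (pp yy / ((pp yy + pm yy) / 2)))
                + (1/2) * (∑' yy : α × α, pm yy * Real.log (pm yy / ((pp yy + pm yy) / 2))))
    (hJ1 : Summable (fun yy : α × α => pp yy * Real.log (pp yy / ((pp yy + pm yy) / 2))))
    (hJ2 : Summable (fun yy : α × α => pm yy * Real.log (pm yy / ((pp yy + pm yy) / 2)))) :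
    ∀ f : α → ℝ,
      Summable (fun yy : α × α =>
        pdata yy.1 * pt yy.2 * Real.log (1 + Real.exp (-(f yy.1 - f yy.2)))) →
      ((∑' yy : α × α, pdata yy.1 * pt yy.2 * Real.log (1 + Real.exp (-(f yy.1 - f yy.2))))
          ≥ Real.log 2 - JSD) ∧
      ((∑' yy : α × α, pdata yy.1 * pt yy.2 * Real.log (1 + Real.exp (-(f yy.1 - f yy.2))))
          = Real.log 2 - JSD
        ↔ ∃ Z : ℝ, ∀ y, f y = Z + Real.log (pdata y / pt y)) :=
  spin_logistic_lower_bound_JSD_general pdata pt hpd hpt hpd1 hpt1 pp pm hpp hpm JSD hJSD hJ1 hJ2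
end

section
/- Let p and q be strictly positive probability mass functions on a finite type and define F(f) = Σ_{y,y'} p(y)·q(y')·log(1 + exp(−(f(y) − f(y')))) over functions f. Then for every f, F(f) ≥ (1/2)·Σ_{y,y'} [a·log(1+b/a) + b·log(1+a/b)], where a = p(y)q(y') and b = p(y')q(y). -/
private lemma spin_key (a b t : ℝ) (ha : 0 < a) (hb : 0 < b) :
    a * Real.log (1 + b / a) + b * Real.log (1 + a / b)
      ≤ a * Real.log (1 + Real.exp (-t)) + b * Real.log (1 + Real.exp t) := by
  set s := Real.exp t with hs
  have hspos : 0 < s := Real.exp_pos t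
  have habpos : 0 < a + b := by linarith
  have h1s : (0:ℝ) < 1 + s := by linarith
  -- rewrite the logs
  have e1 : (1 : ℝ) + Real.exp (-t) = (1 + s) / s := by
    rw [Real.exp_neg, ← hs]; field_simp; ring
  have e2 : (1 : ℝ) + b / a = (a + b) / a := by field_simp
  have e3 : (1 : ℝ) + a / b = (a + b) / b := by field_simp; ring
  rw [e1, e2, e3, Real.log_div (by positivity) (by positivity),
    Real.log_div (by positivity) (by positivity),
    Real.log_div (by positivity) (by positivity)]
  -- two applications of log x ≤ x - 1
  have h1 : Real.log ((a + b) * s / (a * (1 + s))) ≤ (a + b) * s / (a * (1 + s)) - 1 :=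
    Real.log_le_sub_one_of_pos (by positivity)
  have h2 : Real.log ((a + b) / (b * (1 + s))) ≤ (a + b) / (b * (1 + s)) - 1 :=
    Real.log_le_sub_one_of_pos (by positivity)
  rw [Real.log_div (by positivity) (by positivity), Real.log_mul (by positivity) (by positivity),
    Real.log_mul (by positivity) (by positivity)] at h1
  rw [Real.log_div (by positivity) (by positivity), Real.log_mul (by positivity) (by positivity)] at h2
  have hr1 : (a + b) * s / (a * (1 + s)) - 1 = ((a + b) * s - a * (1 + s)) / (a * (1 + s)) := by
    field_simp
  have hr2 : (a + b) / (b * (1 + s)) - 1 = ((a + b) - b * (1 + s)) / (b * (1 + s)) := by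
    field_simp
  rw [hr1] at h1
  rw [hr2] at h2
  have key : a * (((a + b) * s - a * (1 + s)) / (a * (1 + s)))
      + b * (((a + b) - b * (1 + s)) / (b * (1 + s))) = 0 := by
    field_simp; ring
  nlinarith [mul_le_mul_of_nonneg_left h1 ha.le, mul_le_mul_of_nonneg_left h2 hb.le]

/-- Pairing/symmetrization inequality in Lemma B.2:
`F(f) = ∑_{y,y'} p(y)q(y') ℓ(f(y)−f(y'))` is bounded below by
`½ ∑_{y,y'} [a log(1+b/a) + b log(1+a/b)]` with `a = p(y)q(y')`, `b = p(y')q(y)`. -/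
theorem spin_pairing_lower_bound
    {α : Type*} [Fintype α]
    (p q : α → ℝ) (hp : ∀ y, 0 < p y) (hq : ∀ y, 0 < q y)
    (hp1 : ∑ y, p y = 1) (hq1 : ∑ y, q y = 1) :
    ∀ f : α → ℝ,
      (∑ y, ∑ y', p y * q y' * Real.log (1 + Real.exp (-(f y - f y'))))
        ≥ (1/2) * ∑ y, ∑ y',
            (p y * q y' * Real.log (1 + (p y' * q y) / (p y * q y'))
           + p y' * q y * Real.log (1 + (p y * q y') / (p y' * q y))) := by
  intro f
  set F := ∑ y, ∑ y', p y * q y' * Real.log (1 + Real.exp (-(f y - f y'))) with hF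
  have hswap : (∑ y, ∑ y', p y' * q y * Real.log (1 + Real.exp (-(f y' - f y)))) = F := by
    rw [hF, Finset.sum_comm]
  have h2F : 2 * F = ∑ y, ∑ y',
      (p y * q y' * Real.log (1 + Real.exp (-(f y - f y')))
       + p y' * q y * Real.log (1 + Real.exp (-(f y' - f y)))) := by
    simp only [Finset.sum_add_distrib]
    rw [hswap]; ring
  have hle : (∑ y, ∑ y',
      (p y * q y' * Real.log (1 + (p y' * q y) / (p y * q y'))
     + p y' * q y * Real.log (1 + (p y * q y') / (p y' * q y)))) ≤ 2 * F := by
    rw [h2F]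
    refine Finset.sum_le_sum fun y _ => Finset.sum_le_sum fun y' _ => ?_
    have := spin_key (p y * q y') (p y' * q y) (f y - f y')
      (mul_pos (hp y) (hq y')) (mul_pos (hp y') (hq y))
    simpa [neg_sub] using this
  linarith
end

section
/- Let q be a strictly positive probability mass function on a finite type and λ ≥ 1. For any strictly positive probability mass function p on the same type, the normalized geometric interpolation r(y) = q(y)·(p(y)/q(y))^{1/λ} / Z with Z = Σ_z q(z)·(p(z)/q(z))^{1/λ} satisfies KL(r‖p) ≤ KL(q‖p). -/
/-- Gibbs' inequality: KL divergence between positive pmfs is nonnegative. -/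
lemma gibbs_aux {α : Type*} [Fintype α] (u v : α → ℝ)
    (hu : ∀ y, 0 < u y) (hv : ∀ y, 0 < v y)
    (hu1 : ∑ y, u y = 1) (hv1 : ∑ y, v y = 1) :
    0 ≤ ∑ y, u y * Real.log (u y / v y) := by
  have h : ∑ y, u y * Real.log (v y / u y) ≤ 0 := by
    calc ∑ y, u y * Real.log (v y / u y)
        ≤ ∑ y, u y * (v y / u y - 1) := by
          refine Finset.sum_le_sum fun y _ => ?_
          have h1 := hu y; have h2 := hv y
          exact mul_le_mul_of_nonneg_left
            (Real.log_le_sub_one_of_pos (by positivity)) h1.le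
      _ = ∑ y, (v y - u y) := by
          refine Finset.sum_congr rfl fun y _ => ?_
          have h1 := (hu y).ne'
          field_simp
      _ = 0 := by rw [Finset.sum_sub_distrib, hu1, hv1]; ring
  have h2 : ∑ y, u y * Real.log (u y / v y)
      = -∑ y, u y * Real.log (v y / u y) := by
    rw [← Finset.sum_neg_distrib]
    refine Finset.sum_congr rfl fun y _ => ?_
    rw [Real.log_div (hu y).ne' (hv y).ne', Real.log_div (hv y).ne' (hu y).ne']
    ring
  linarith

/-- For `λ ≥ 1`, the SPIN opponent update `r = q·(p/q)^{1/λ}/Z` does not increase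
the KL divergence to the target distribution `p`: `KL(r‖p) ≤ KL(q‖p)`. -/
theorem spin_update_KL_nonincreasing
    {α : Type*} [Fintype α]
    (p q : α → ℝ) (hp : ∀ y, 0 < p y) (hq : ∀ y, 0 < q y)
    (hp1 : ∑ y, p y = 1) (hq1 : ∑ y, q y = 1)
    (lam : ℝ) (hlam : 1 ≤ lam)
    (Z : ℝ) (hZ : Z = ∑ z, q z * (p z / q z) ^ (1 / lam))
    (r : α → ℝ) (hr : ∀ y, r y = q y * (p y / q y) ^ (1 / lam) / Z) :
    (∑ y, r y * Real.log (r y / p y)) ≤ ∑ y, q y * Real.log (q y / p y) := by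
  set t : ℝ := 1 / lam with ht_def
  have hlam0 : (0:ℝ) < lam := lt_of_lt_of_le one_pos hlam
  have ht : 0 < t := by positivity
  have ht1 : t ≤ 1 := by
    rw [ht_def, div_le_one hlam0]; exact hlam
  have hZpos : 0 < Z := by
    rw [hZ]
    have : Nonempty α := by
      by_contra h
      simp [not_nonempty_iff.mp h] at hq1
    refine Finset.sum_pos (fun z _ => ?_) Finset.univ_nonempty
    have := hp z; have := hq z; positivity
  have hrpos : ∀ y, 0 < r y := by
    intro y; rw [hr y]
    have := hp y; have := hq y; positivity
  have hr1 : ∑ y, r y = 1 := by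
    have : ∑ y, r y = (∑ y, q y * (p y / q y) ^ t) / Z := by
      rw [Finset.sum_div]
      exact Finset.sum_congr rfl fun y _ => hr y
    rw [this, ← hZ, div_self hZpos.ne']
  -- logarithm of r
  have hlog : ∀ y, Real.log (r y)
      = Real.log (q y) + t * (Real.log (p y) - Real.log (q y)) - Real.log Z := by
    intro y
    rw [hr y, Real.log_div (by have := hp y; have := hq y; positivity) hZpos.ne',
      Real.log_mul (hq y).ne' (by have := hp y; have := hq y; positivity),
      Real.log_rpow (by have := hp y; have := hq y; positivity),
      Real.log_div (hp y).ne' (hq y).ne']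
  set S1 : ℝ := ∑ y, r y * (Real.log (p y) - Real.log (q y)) with hS1
  set S2 : ℝ := ∑ y, q y * (Real.log (p y) - Real.log (q y)) with hS2
  -- KL(r‖p) = (t-1) S1 - log Z
  have eKRP : ∑ y, r y * Real.log (r y / p y) = (t - 1) * S1 - Real.log Z := by
    have : ∑ y, r y * Real.log (r y / p y)
        = ∑ y, ((t - 1) * (r y * (Real.log (p y) - Real.log (q y)))
            - Real.log Z * r y) := by
      refine Finset.sum_congr rfl fun y _ => ?_
      rw [Real.log_div (hrpos y).ne' (hp y).ne', hlog y]; ring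
    rw [this, Finset.sum_sub_distrib, ← Finset.mul_sum, ← Finset.mul_sum, hr1,
      hS1, mul_one]
  -- KL(r‖q) = t S1 - log Z
  have eKRQ : ∑ y, r y * Real.log (r y / q y) = t * S1 - Real.log Z := by
    have : ∑ y, r y * Real.log (r y / q y)
        = ∑ y, (t * (r y * (Real.log (p y) - Real.log (q y)))
            - Real.log Z * r y) := by
      refine Finset.sum_congr rfl fun y _ => ?_
      rw [Real.log_div (hrpos y).ne' (hq y).ne', hlog y]; ring
    rw [this, Finset.sum_sub_distrib, ← Finset.mul_sum, ← Finset.mul_sum, hr1,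
      hS1, mul_one]
  -- KL(q‖r) = -t S2 + log Z
  have eKQR : ∑ y, q y * Real.log (q y / r y) = -(t * S2) + Real.log Z := by
    have : ∑ y, q y * Real.log (q y / r y)
        = ∑ y, (-(t * (q y * (Real.log (p y) - Real.log (q y))))
            + Real.log Z * q y) := by
      refine Finset.sum_congr rfl fun y _ => ?_
      rw [Real.log_div (hq y).ne' (hrpos y).ne', hlog y]; ring
    rw [this, Finset.sum_add_distrib, Finset.sum_neg_distrib, ← Finset.mul_sum,
      ← Finset.mul_sum, hq1, mul_one]
  -- KL(q‖p) = -S2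
  have eKQP : ∑ y, q y * Real.log (q y / p y) = -S2 := by
    rw [hS2, ← Finset.sum_neg_distrib]
    refine Finset.sum_congr rfl fun y _ => ?_
    rw [Real.log_div (hq y).ne' (hp y).ne']; ring
  have g1 : 0 ≤ ∑ y, r y * Real.log (r y / q y) := gibbs_aux r q hrpos hq hr1 hq1
  have g2 : 0 ≤ ∑ y, q y * Real.log (q y / r y) := gibbs_aux q r hq hrpos hq1 hr1
  rw [eKRQ] at g1
  rw [eKQR] at g2
  rw [eKRP, eKQP]
  -- from g1: log Z ≤ t S1 ; from g2: t S2 ≤ log Z ; hence S2 ≤ S1, and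
  -- (t-1) S1 - log Z ≤ (t-1) S2 - t S2 = -S2 since t - 1 ≤ 0.
  have hint : (1 - t) * (t * S2) ≤ (1 - t) * (t * S1) :=
    mul_le_mul_of_nonneg_left (by linarith) (by linarith)
  have key : t * ((t - 1) * S1 - Real.log Z + S2) ≤ 0 := by
    nlinarith [mul_nonneg ht.le g2]
  nlinarith [key, ht]
end
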